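/- arXiv:1511.02655 — 2 statements merged into one kernel-verified Lean document; each statement's English description precedes it below -/
import Mathlib

section
/- The quantity C(θ, θ') = −(R_o/2)·(i₀ − R_o R_t cos θ)²·(θ')² + R_o R_t·(i₀ − (R_o R_t/2)·cos θ)·(cos θ − a₀ sin θ) + a₀·θ·(I₀ i₀ + R_o² R_t²/2) − a₀ R_o R_t I₀ sin θ is a first integral of the ODE θ'' = (a₀ I₀ − a₀ R_o R_t cos θ − R_o R_t (R_o sin θ·(θ')² + sin θ))/(R_o·(i₀ − R_o R_t cos θ)); that is, along any solution θ(t) of this ODE, the derivative d/dt C(θ(t), θ'(t)) = 0. -/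
open Real

/-!
Writing `A = i0 - Ro Rt cos θ`, the quantity `C` has the shape `U(θ) - m(θ) θ'² / 2` with
inertia `m = Ro A²` and a potential `U`. Along any twice differentiable `θ`,
`dC/dt = θ' (U'(θ) - m'(θ) θ'² / 2 - m(θ) θ'')`, and multiplying the equation of motion
`Ro A θ'' = …` by `A` shows that the bracket vanishes; this last step uses
`U'(θ) = A (a0 I0 - a0 Ro Rt cos θ - Ro Rt sin θ)`, which holds thanks to `sin² + cos² = 1`.
-/

/-- The generalized-energy first integral of the reduced system. -/
noncomputable def Cint (a0 Ro Rt i0 I0 θ p : ℝ) : ℝ :=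
  -(Ro / 2) * (i0 - Ro * Rt * Real.cos θ) ^ 2 * p ^ 2
    + Ro * Rt * (i0 - Ro * Rt / 2 * Real.cos θ) * (Real.cos θ - a0 * Real.sin θ)
    + a0 * θ * (I0 * i0 + Ro ^ 2 * Rt ^ 2 / 2)
    - a0 * Ro * Rt * I0 * Real.sin θ

theorem hasDerivAt_potential_sub_kinetic {m U θ v : ℝ → ℝ} {dm dU a t : ℝ}
    (hm : HasDerivAt m dm (θ t)) (hU : HasDerivAt U dU (θ t))
    (hθ : HasDerivAt θ (v t) t) (hv : HasDerivAt v a t) :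
    HasDerivAt (fun s => U (θ s) - m (θ s) / 2 * v s ^ 2)
      (v t * (dU - dm / 2 * v t ^ 2 - m (θ t) * a)) t := by
  have h := (hU.comp t hθ).sub (((hm.comp t hθ).div_const 2).mul (hv.pow 2))
  exact h.congr_deriv (by simp only [Function.comp_apply, Pi.pow_apply]; ring)

namespace PendulumRobot

variable (a0 Ro Rt i0 I0 : ℝ)

noncomputable def inertia (x : ℝ) : ℝ :=
  Ro * (i0 - Ro * Rt * cos x) ^ 2

noncomputable def potential (x : ℝ) : ℝ :=
  Ro * Rt * (i0 - Ro * Rt / 2 * cos x) * (cos x - a0 * sin x)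
    + a0 * x * (I0 * i0 + Ro ^ 2 * Rt ^ 2 / 2) - a0 * Ro * Rt * I0 * sin x

theorem Cint_eq_potential_sub_kinetic (x p : ℝ) :
    Cint a0 Ro Rt i0 I0 x p = potential a0 Ro Rt i0 I0 x - inertia Ro Rt i0 x / 2 * p ^ 2 := by
  simp only [Cint, potential, inertia]
  ring

theorem hasDerivAt_inertia (x : ℝ) :
    HasDerivAt (inertia Ro Rt i0) (2 * Ro * (i0 - Ro * Rt * cos x) * (Ro * Rt * sin x)) x := by
  have h := (((hasDerivAt_cos x).const_mul (Ro * Rt)).const_sub i0).pow 2 |>.const_mul Ro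
  exact h.congr_deriv (by ring)

theorem hasDerivAt_potential (x : ℝ) :
    HasDerivAt (potential a0 Ro Rt i0 I0)
      ((i0 - Ro * Rt * cos x) * (a0 * I0 - a0 * Ro * Rt * cos x - Ro * Rt * sin x)) x := by
  have hc := hasDerivAt_cos x
  have hs := hasDerivAt_sin x
  have h := ((((hc.const_mul (Ro * Rt / 2)).const_sub i0).const_mul (Ro * Rt)).mul
      (hc.sub (hs.const_mul a0))).add
      (((hasDerivAt_id x).const_mul a0).mul_const (I0 * i0 + Ro ^ 2 * Rt ^ 2 / 2)) |>.sub
      (hs.const_mul (a0 * Ro * Rt * I0))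
  exact h.congr_deriv (by
    simp only [Pi.sub_apply]
    linear_combination (-(a0 * Ro ^ 2 * Rt ^ 2 / 2)) * sin_sq_add_cos_sq x)

variable {a0 Ro Rt i0 I0}

theorem sub_mul_cos_pos (hRo : 0 < Ro) (hRt : 0 < Rt) (hden : Ro * Rt < i0) (x : ℝ) :
    0 < i0 - Ro * Rt * cos x := by
  nlinarith [mul_pos hRo hRt, cos_le_one x]

theorem inertia_mul_eq_of_eq_div {x p q : ℝ} (hRo : Ro ≠ 0) (hA : i0 - Ro * Rt * cos x ≠ 0)
    (hq : q = (a0 * I0 - a0 * Ro * Rt * cos x - Ro * Rt * (Ro * sin x * p ^ 2 + sin x))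
      / (Ro * (i0 - Ro * Rt * cos x))) :
    inertia Ro Rt i0 x * q =
      (i0 - Ro * Rt * cos x) * (a0 * I0 - a0 * Ro * Rt * cos x - Ro * Rt * sin x)
        - 2 * Ro * (i0 - Ro * Rt * cos x) * (Ro * Rt * sin x) / 2 * p ^ 2 := by
  rw [hq, inertia]
  field_simp
  ring

end PendulumRobot

open PendulumRobot in
theorem Cint_first_integral_general (a0 Ro Rt i0 I0 : ℝ)
    (hRo : 0 < Ro) (hRt : 0 < Rt)
    (hden : Ro * Rt < i0) (θ : ℝ → ℝ) (hθ : ContDiff ℝ 2 θ)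
    (hODE : ∀ t, deriv (deriv θ) t =
      (a0 * I0 - a0 * Ro * Rt * Real.cos (θ t)
        - Ro * Rt * (Ro * Real.sin (θ t) * (deriv θ t) ^ 2 + Real.sin (θ t)))
      / (Ro * (i0 - Ro * Rt * Real.cos (θ t)))) :
    ∀ t, deriv (fun s => Cint a0 Ro Rt i0 I0 (θ s) (deriv θ s)) t = 0 := by
  have hθ1 : Differentiable ℝ θ := hθ.differentiable (by norm_num)
  have hθ2 : Differentiable ℝ (deriv θ) :=
    (hθ.iterate_deriv' 1 1).differentiable (by norm_num)
  intro t
  have hC := hasDerivAt_potential_sub_kinetic (hasDerivAt_inertia Ro Rt i0 (θ t))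
    (hasDerivAt_potential a0 Ro Rt i0 I0 (θ t)) (hθ1 t).hasDerivAt (hθ2 t).hasDerivAt
  simp only [← Cint_eq_potential_sub_kinetic] at hC
  have hA := (sub_mul_cos_pos hRo hRt hden (θ t)).ne'
  rw [hC.deriv, inertia_mul_eq_of_eq_div hRo.ne' hA (hODE t)]
  ring

theorem Cint_first_integral (a0 Ro Rt i0 I0 : ℝ)
    (ha0 : 0 < a0) (hRo : 0 < Ro) (hRt : 0 < Rt) (hi0 : 0 < i0) (hI0 : 0 < I0)
    (hden : Ro * Rt < i0) (θ : ℝ → ℝ) (hθ : ContDiff ℝ 2 θ)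
    (hODE : ∀ t, deriv (deriv θ) t =
      (a0 * I0 - a0 * Ro * Rt * Real.cos (θ t)
        - Ro * Rt * (Ro * Real.sin (θ t) * (deriv θ t) ^ 2 + Real.sin (θ t)))
      / (Ro * (i0 - Ro * Rt * Real.cos (θ t)))) :
    ∀ t, deriv (fun s => Cint a0 Ro Rt i0 I0 (θ s) (deriv θ s)) t = 0 :=
  Cint_first_integral_general a0 Ro Rt i0 I0 hRo hRt hden θ hθ hODE
end

section
/- If the ball rolls without slipping, V = R_o·k × Ω with k = (0,0,1), then the contact-point acceleration satisfies r'' = R_o·k × Ω' and, writing Ω' = (Ω₁', Ω₂', 0), one has r'' = R_o·(−Ω₂', Ω₁', 0); in particular if Ω₁' = (a/R_o)·sin φ and Ω₂' = −(a/R_o)·cos φ for a scalar function a(t) and constant angle φ, then r'' = a(t)·(cos φ, sin φ, 0), i.e., the velocity changes only in the fixed direction s = (cos φ, sin φ, 0). -/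
open Matrix

theorem velocity_changes_along_oscillation (Ro : ℝ) (hRo : 0 < Ro)
    (r Ω : ℝ → Fin 3 → ℝ) (Ω1' Ω2' : ℝ → ℝ)
    (hns : ∀ t, HasDerivAt r (Ro • crossProduct ![0, 0, 1] (Ω t)) t)
    (hΩ : ∀ t, HasDerivAt Ω ![Ω1' t, Ω2' t, 0] t) :
    (∀ t, HasDerivAt (deriv r) (Ro • crossProduct ![0, 0, 1] ![Ω1' t, Ω2' t, 0]) t) ∧
    (∀ t, Ro • crossProduct ![0, 0, 1] ![Ω1' t, Ω2' t, 0] = Ro • ![-(Ω2' t), Ω1' t, 0]) ∧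
    (∀ (a : ℝ → ℝ) (φ : ℝ),
      (∀ t, Ω1' t = a t / Ro * Real.sin φ) →
      (∀ t, Ω2' t = -(a t / Ro) * Real.cos φ) →
      ∀ t, HasDerivAt (deriv r) (a t • ![Real.cos φ, Real.sin φ, 0]) t) := by
  have hderiv : deriv r = fun t => Ro • crossProduct ![0, 0, 1] (Ω t) := by
    funext t
    exact (hns t).deriv
  have key : ∀ t, HasDerivAt (deriv r)
      (Ro • crossProduct ![0, 0, 1] ![Ω1' t, Ω2' t, 0]) t := by
    intro t
    rw [hderiv]
    have hL : HasDerivAt (fun t => crossProduct ![0, 0, 1] (Ω t))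
        (crossProduct ![0, 0, 1] ![Ω1' t, Ω2' t, 0]) t :=
      (LinearMap.toContinuousLinearMap
        (crossProduct (![0, 0, 1] : Fin 3 → ℝ))).hasFDerivAt.comp_hasDerivAt t (hΩ t)
    exact hL.const_smul Ro
  have heq : ∀ t, Ro • crossProduct ![0, 0, 1] ![Ω1' t, Ω2' t, 0]
      = Ro • ![-(Ω2' t), Ω1' t, 0] := by
    intro t
    congr 1
    simp [crossProduct]
  refine ⟨key, heq, ?_⟩
  intro a φ h1 h2 t
  have := key t
  rw [heq t, h1 t, h2 t] at this
  convert this using 1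
  funext i
  fin_cases i <;> simp <;> field_simp
end
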